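/- Under the mixture observation model, λ_min(H*_SS) ≥ (1−ν)·η(‖v*‖₁) > 0. In particular, the assumption q ∈ (|NE*|/2^n, 1) (equivalently ν < 1) by itself guarantees that the minimum eigenvalue of H*_SS is strictly positive. -/

import Mathlib

/- Common setup: linear influence games (LIGs), the PSNE set, the noisy
observation model, feature vectors, the logistic loss and its gradient,
population/sample Hessian and scatter matrices, and Rayleigh-quotient
encodings of eigenvalue bounds for (symmetric) submatrices.

Joint actions in `{-1,+1}^n` are modeled as `Fin n → Bool` via the sign map
`sgn` (`true ↦ +1`, `false ↦ -1`).  For player `i`, the feature vector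
`z_i(x) = (x_i · x_{-i}, x_i)` and the parameter vector `v_i = (w_{i,-i}, -b_i)`
are indexed by `Fin n`, with the bias coordinate placed at index `i`
(a fixed permutation of the paper's coordinate ordering), so that
`v_i ⬝ᵥ z_i(x) = x_i (∑_{j ≠ i} W i j · x_j - b i)` is player `i`'s payoff. -/

open Matrix Finset

noncomputable section

/-- Sign of a Boolean action: `true ↦ +1`, `false ↦ -1`. -/
def sgn (a : Bool) : ℝ := if a then 1 else -1

/-- Payoff of player `i` at joint action `x` in the LIG `(W, b)`:
`x_i (∑_{j ≠ i} W i j · x_j - b i)`. -/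
def payoff {n : ℕ} (W : Matrix (Fin n) (Fin n) ℝ) (b : Fin n → ℝ)
    (i : Fin n) (x : Fin n → Bool) : ℝ :=
  sgn (x i) * ((∑ j ∈ Finset.univ.erase i, W i j * sgn (x j)) - b i)

/-- The pure-strategy Nash equilibria set `NE(W, b)`. -/
def NEset {n : ℕ} (W : Matrix (Fin n) (Fin n) ℝ) (b : Fin n → ℝ) :
    Finset (Fin n → Bool) :=
  @Finset.filter _ (fun x => ∀ i, 0 ≤ payoff W b i x) (Classical.decPred _)
    Finset.univ

/-- The observation distribution
`p(x) = q·1[x ∈ NE]/|NE| + (1-q)·1[x ∉ NE]/(2^n - |NE|)`. -/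
def pObs {n : ℕ} (q : ℝ) (NE : Finset (Fin n → Bool)) (x : Fin n → Bool) : ℝ :=
  if x ∈ NE then q / (NE.card : ℝ)
  else (1 - q) / ((2 : ℝ) ^ n - (NE.card : ℝ))

/-- The mixture coefficient `ν = (q - c/2^n)/(1 - c/2^n)`, where `c = |NE*|`. -/
def mixCoef (n : ℕ) (q : ℝ) (c : ℕ) : ℝ :=
  (q - (c : ℝ) / (2 : ℝ) ^ n) / (1 - (c : ℝ) / (2 : ℝ) ^ n)

/-- Feature vector `z_i(x) = (x_i·x_{-i}, x_i)` (bias coordinate at index `i`). -/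
def zvec {n : ℕ} (i : Fin n) (x : Fin n → Bool) : Fin n → ℝ :=
  fun j => if j = i then sgn (x i) else sgn (x i) * sgn (x j)

/-- Parameter vector `v_i = (w_{i,-i}, -b_i)` (bias coordinate at index `i`). -/
def vvec {n : ℕ} (W : Matrix (Fin n) (Fin n) ℝ) (b : Fin n → ℝ) (i : Fin n) :
    Fin n → ℝ :=
  fun j => if j = i then -b i else W i j

/-- Support `S = {j : v_j ≠ 0}` of a vector. -/
def supp {n : ℕ} (v : Fin n → ℝ) : Finset (Fin n) :=
  @Finset.filter _ (fun j => v j ≠ 0) (Classical.decPred _) Finset.univ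

/-- `η(s) = 1/(e^{s/2} + e^{-s/2})²`. -/
def eta (s : ℝ) : ℝ := 1 / (Real.exp (s / 2) + Real.exp (-s / 2)) ^ 2

/-- Logistic loss `ℓ_i(v, D) = (1/m) ∑_l log(1 + exp(-vᵀ z_i(x⁽ˡ⁾)))`. -/
def loss {n m : ℕ} (i : Fin n) (v : Fin n → ℝ)
    (D : Fin m → (Fin n → Bool)) : ℝ :=
  (1 / (m : ℝ)) * ∑ l, Real.log (1 + Real.exp (-(v ⬝ᵥ zvec i (D l))))

/-- Gradient of the logistic loss,
`∇ℓ(v, D) = (1/m) ∑_l (-z⁽ˡ⁾)/(1 + exp(vᵀ z⁽ˡ⁾))`. -/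
def gradLoss {n m : ℕ} (i : Fin n) (v : Fin n → ℝ)
    (D : Fin m → (Fin n → Bool)) : Fin n → ℝ :=
  fun j => (1 / (m : ℝ)) *
    ∑ l, -(zvec i (D l) j) / (1 + Real.exp (v ⬝ᵥ zvec i (D l)))

/-- ℓ1 norm `‖v‖₁ = ∑_j |v_j|`. -/
def norm1 {n : ℕ} (v : Fin n → ℝ) : ℝ := ∑ j, |v j|

/-- Quadratic form `yᵀ M y`. -/
def quadForm {n : ℕ} (M : Matrix (Fin n) (Fin n) ℝ) (y : Fin n → ℝ) : ℝ :=
  y ⬝ᵥ M.mulVec y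

/-- `λ_min(M_SS) ≥ c`, encoded via the Rayleigh quotient over vectors
supported on `S` (exactly equivalent for symmetric `M`). -/
def minEigSubGE {n : ℕ} (M : Matrix (Fin n) (Fin n) ℝ) (S : Finset (Fin n))
    (c : ℝ) : Prop :=
  ∀ y : Fin n → ℝ, (∀ j ∉ S, y j = 0) → c * (∑ j, y j ^ 2) ≤ quadForm M y

/-- `λ_min(M_SS) > c` (Rayleigh form; equivalent for symmetric `M` since the
unit sphere of the finite-dimensional subspace is compact). -/
def minEigSubGT {n : ℕ} (M : Matrix (Fin n) (Fin n) ℝ) (S : Finset (Fin n))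
    (c : ℝ) : Prop :=
  ∀ y : Fin n → ℝ, (∀ j ∉ S, y j = 0) → y ≠ 0 →
    c * (∑ j, y j ^ 2) < quadForm M y

/-- `λ_max(M_SS) ≤ c` (Rayleigh form). -/
def maxEigSubLE {n : ℕ} (M : Matrix (Fin n) (Fin n) ℝ) (S : Finset (Fin n))
    (c : ℝ) : Prop :=
  ∀ y : Fin n → ℝ, (∀ j ∉ S, y j = 0) → quadForm M y ≤ c * (∑ j, y j ^ 2)

/-- `λ_max(M_SS) < c` (Rayleigh form). -/
def maxEigSubLT {n : ℕ} (M : Matrix (Fin n) (Fin n) ℝ) (S : Finset (Fin n))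
    (c : ℝ) : Prop :=
  ∀ y : Fin n → ℝ, (∀ j ∉ S, y j = 0) → y ≠ 0 →
    quadForm M y < c * (∑ j, y j ^ 2)

/-- `λ_max(M_SS) ≥ c` (Rayleigh form: some nonzero supported vector attains it). -/
def maxEigSubGE {n : ℕ} (M : Matrix (Fin n) (Fin n) ℝ) (S : Finset (Fin n))
    (c : ℝ) : Prop :=
  ∃ y : Fin n → ℝ, (∀ j ∉ S, y j = 0) ∧ y ≠ 0 ∧
    c * (∑ j, y j ^ 2) ≤ quadForm M y

/-- Population Hessian `H*_i = E_{x∼p}[η(vᵀz_i(x)) z_i(x) z_i(x)ᵀ]`. -/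
def popHess {n : ℕ} (q : ℝ) (NE : Finset (Fin n → Bool)) (i : Fin n)
    (v : Fin n → ℝ) : Matrix (Fin n) (Fin n) ℝ :=
  ∑ x : Fin n → Bool,
    (pObs q NE x * eta (v ⬝ᵥ zvec i x)) • vecMulVec (zvec i x) (zvec i x)

/-- Population scatter matrix `E_{x∼p}[z_i(x) z_i(x)ᵀ]`. -/
def popScatter {n : ℕ} (q : ℝ) (NE : Finset (Fin n → Bool)) (i : Fin n) :
    Matrix (Fin n) (Fin n) ℝ :=
  ∑ x : Fin n → Bool, pObs q NE x • vecMulVec (zvec i x) (zvec i x)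

/-- Sample Hessian `H^m = (1/m) ∑_l η(vᵀz⁽ˡ⁾) z⁽ˡ⁾ (z⁽ˡ⁾)ᵀ`. -/
def sampleHess {n m : ℕ} (i : Fin n) (v : Fin n → ℝ)
    (D : Fin m → (Fin n → Bool)) : Matrix (Fin n) (Fin n) ℝ :=
  (1 / (m : ℝ)) •
    ∑ l, eta (v ⬝ᵥ zvec i (D l)) • vecMulVec (zvec i (D l)) (zvec i (D l))

/-- Sample scatter matrix `(1/m) ∑_l z⁽ˡ⁾ (z⁽ˡ⁾)ᵀ`. -/
def sampleScatter {n m : ℕ} (i : Fin n) (D : Fin m → (Fin n → Bool)) :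
    Matrix (Fin n) (Fin n) ℝ :=
  (1 / (m : ℝ)) • ∑ l, vecMulVec (zvec i (D l)) (zvec i (D l))

/-- Probability of the event `E` under `m` i.i.d. draws from `p`. -/
def iidProb {X : Type*} [Fintype X] (p : X → ℝ) (m : ℕ)
    (E : Set (Fin m → X)) : ℝ :=
  ∑ D : Fin m → X, E.indicator (fun D => ∏ l, p (D l)) D

/-- `ρ` is the minimum payoff over the PSNE set of `(W, b)`. -/
def isMinPayoff {n : ℕ} (W : Matrix (Fin n) (Fin n) ℝ) (b : Fin n → ℝ)
    (ρ : ℝ) : Prop :=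
  IsLeast {r : ℝ | ∃ x ∈ NEset W b, ∃ i, r = payoff W b i x} ρ


/- Writing ν for the mixture coefficient, the observation law is
`p = ν · Unif(NE*) + (1 - ν) · Unif({-1,+1}^n)`, so `p(x) ≥ (1 - ν)/2^n` everywhere
as soon as `ν ≥ 0`. Since `η` is even and decreasing on `[0, ∞)` and `|v*ᵀ z(x)| ≤ ‖v*‖₁`,
every weight `p(x) η(v*ᵀ z(x))` of the Hessian is at least `(1 - ν) η(‖v*‖₁) / 2^n`.
Finally the features are orthonormal under the uniform law, `∑ₓ z(x) z(x)ᵀ = 2^n I`,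
because flipping a single player's action negates the off-diagonal products `z_j z_k`. -/

lemma sgn_not (a : Bool) : sgn (!a) = -sgn a := by
  cases a <;> norm_num [sgn]

lemma abs_sgn (a : Bool) : |sgn a| = 1 := by
  cases a <;> norm_num [sgn]

lemma mixCoef_nonneg {n c : ℕ} {q : ℝ} (hc : (c : ℝ) < 2 ^ n) (hq : (c : ℝ) / 2 ^ n ≤ q) :
    0 ≤ mixCoef n q c := by
  have : (c : ℝ) / 2 ^ n < 1 := (div_lt_one (by positivity)).mpr hc
  exact div_nonneg (sub_nonneg.mpr hq) (sub_nonneg.mpr this.le)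

lemma mixCoef_le_one {n c : ℕ} {q : ℝ} (hc : (c : ℝ) < 2 ^ n) (hq : q ≤ 1) :
    mixCoef n q c ≤ 1 := by
  have : (c : ℝ) / 2 ^ n < 1 := (div_lt_one (by positivity)).mpr hc
  exact (div_le_one (sub_pos.mpr this)).mpr (by linarith)

lemma mixCoef_lt_one {n c : ℕ} {q : ℝ} (hc : (c : ℝ) < 2 ^ n) (hq : q < 1) :
    mixCoef n q c < 1 := by
  have : (c : ℝ) / 2 ^ n < 1 := (div_lt_one (by positivity)).mpr hc
  exact (div_lt_one (sub_pos.mpr this)).mpr (by linarith)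

lemma pObs_eq_mixture {n : ℕ} (q : ℝ) (NE : Finset (Fin n → Bool))
    (hc : (NE.card : ℝ) < 2 ^ n) (x : Fin n → Bool) :
    pObs q NE x = mixCoef n q NE.card * (if x ∈ NE then 1 / (NE.card : ℝ) else 0) +
      (1 - mixCoef n q NE.card) / 2 ^ n := by
  have h2n : (2 : ℝ) ^ n ≠ 0 := by positivity
  have hsub : (2 : ℝ) ^ n - NE.card ≠ 0 := (sub_pos.mpr hc).ne'
  unfold pObs mixCoef
  split_ifs with hx
  · have hcard : (NE.card : ℝ) ≠ 0 := by exact_mod_cast (Finset.card_pos.mpr ⟨x, hx⟩).ne'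
    field_simp
    ring
  · field_simp
    ring

lemma one_sub_mixCoef_div_le_pObs {n : ℕ} (q : ℝ) (NE : Finset (Fin n → Bool))
    (hc : (NE.card : ℝ) < 2 ^ n) (hq : (NE.card : ℝ) / 2 ^ n ≤ q) (x : Fin n → Bool) :
    (1 - mixCoef n q NE.card) / 2 ^ n ≤ pObs q NE x := by
  rw [pObs_eq_mixture q NE hc x, le_add_iff_nonneg_left]
  refine mul_nonneg (mixCoef_nonneg hc hq) ?_
  split_ifs <;> positivity

lemma eta_eq_one_div_two_mul_cosh_sq (s : ℝ) : eta s = 1 / (2 * Real.cosh (s / 2)) ^ 2 := by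
  rw [eta, Real.cosh_eq]
  ring_nf

lemma eta_pos (s : ℝ) : 0 < eta s := by
  unfold eta
  positivity

lemma eta_le_eta_of_abs_le {r s : ℝ} (h : |s| ≤ |r|) : eta r ≤ eta s := by
  have hcosh : Real.cosh (s / 2) ≤ Real.cosh (r / 2) := by
    rw [Real.cosh_le_cosh, abs_div, abs_div]
    gcongr
  rw [eta_eq_one_div_two_mul_cosh_sq, eta_eq_one_div_two_mul_cosh_sq]
  gcongr

lemma Fintype.sum_eq_zero_of_involutive_of_comp_eq_neg {α : Type*} [Fintype α]
    {σ : α → α} (hσ : Function.Involutive σ) (f : α → ℝ) (hf : ∀ x, f (σ x) = -f x) :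
    ∑ x, f x = 0 := by
  rw [← self_eq_neg, ← Finset.sum_neg_distrib, ← hσ.bijective.sum_comp f]
  simp only [hf]

section Features

variable {n : ℕ} (i : Fin n)

lemma abs_zvec (x : Fin n → Bool) (j : Fin n) : |zvec i x j| = 1 := by
  unfold zvec
  split_ifs
  · exact abs_sgn _
  · rw [abs_mul, abs_sgn, abs_sgn, one_mul]

lemma zvec_mul_self (x : Fin n → Bool) (j : Fin n) : zvec i x j * zvec i x j = 1 := by
  rw [← abs_mul_abs_self, abs_zvec, one_mul]

lemma abs_dotProduct_zvec_le_norm1 (v : Fin n → ℝ) (x : Fin n → Bool) :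
    |v ⬝ᵥ zvec i x| ≤ norm1 v := by
  refine (Finset.abs_sum_le_sum_abs _ _).trans_eq (Finset.sum_congr rfl fun j _ => ?_)
  rw [abs_mul, abs_zvec, mul_one]

lemma zvec_update_not_self {t : Fin n} (ht : t ≠ i) (x : Fin n → Bool) :
    zvec i (Function.update x t (!x t)) t = -zvec i x t := by
  simp [zvec, ht, Function.update_of_ne ht.symm, sgn_not]

lemma zvec_update_not_of_ne {t j : Fin n} (ht : t ≠ i) (hj : j ≠ t) (x : Fin n → Bool) :
    zvec i (Function.update x t (!x t)) j = zvec i x j := by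
  simp [zvec, Function.update_of_ne ht.symm, Function.update_of_ne hj]

lemma sum_zvec_mul_zvec_of_ne {j k : Fin n} (hjk : j ≠ k) :
    ∑ x : Fin n → Bool, zvec i x j * zvec i x k = 0 := by
  wlog hj : j ≠ i generalizing j k
  · simp_rw [mul_comm (zvec i _ j)]
    exact this hjk.symm (by rintro rfl; exact hj hjk)
  have hflip : Function.Involutive fun x : Fin n → Bool => Function.update x j (!x j) := by
    intro x
    simp
  refine Fintype.sum_eq_zero_of_involutive_of_comp_eq_neg hflip _ fun x => ?_
  simp only [zvec_update_not_self i hj, zvec_update_not_of_ne i hj hjk.symm, neg_mul]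

lemma sum_vecMulVec_zvec :
    ∑ x : Fin n → Bool, vecMulVec (zvec i x) (zvec i x) =
      (2 : ℝ) ^ n • (1 : Matrix (Fin n) (Fin n) ℝ) := by
  ext j k
  simp only [Matrix.sum_apply, vecMulVec_apply, Matrix.smul_apply, Matrix.one_apply,
    smul_eq_mul]
  split_ifs with hjk
  · subst hjk
    simp [zvec_mul_self, Finset.card_univ]
  · rw [sum_zvec_mul_zvec_of_ne i hjk, mul_zero]

end Features

lemma quadForm_sum_smul_vecMulVec {n : ℕ} {α : Type*} [Fintype α] (c : α → ℝ)
    (z : α → Fin n → ℝ) (y : Fin n → ℝ) :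
    quadForm (∑ x, c x • vecMulVec (z x) (z x)) y = ∑ x, c x * (y ⬝ᵥ z x) ^ 2 := by
  simp only [quadForm, Matrix.sum_mulVec, Matrix.smul_mulVec, vecMulVec_mulVec,
    dotProduct_sum, dotProduct_smul, smul_eq_mul, op_smul_eq_smul, dotProduct_comm (z _) y]
  exact Finset.sum_congr rfl fun x _ => by ring

lemma sum_dotProduct_zvec_sq {n : ℕ} (i : Fin n) (y : Fin n → ℝ) :
    ∑ x : Fin n → Bool, (y ⬝ᵥ zvec i x) ^ 2 = 2 ^ n * ∑ j, y j ^ 2 := by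
  have h := quadForm_sum_smul_vecMulVec (fun _ => 1) (zvec i) y
  simp only [one_smul, one_mul, sum_vecMulVec_zvec] at h
  rw [← h, quadForm, Matrix.smul_mulVec, one_mulVec, dotProduct_smul, smul_eq_mul]
  simp only [dotProduct, sq]

lemma quadForm_popHess_ge {n : ℕ} (q : ℝ) (NE : Finset (Fin n → Bool))
    (hc : (NE.card : ℝ) < 2 ^ n) (hq : (NE.card : ℝ) / 2 ^ n ≤ q) (hq' : q ≤ 1) (i : Fin n)
    (v y : Fin n → ℝ) :
    (1 - mixCoef n q NE.card) * eta (norm1 v) * ∑ j, y j ^ 2 ≤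
      quadForm (popHess q NE i v) y := by
  have hp : ∀ x, (1 - mixCoef n q NE.card) / 2 ^ n ≤ pObs q NE x :=
    one_sub_mixCoef_div_le_pObs q NE hc hq
  have hp₀ : 0 ≤ (1 - mixCoef n q NE.card) / 2 ^ n :=
    div_nonneg (sub_nonneg.mpr (mixCoef_le_one hc hq')) (by positivity)
  have hweight : ∀ x, (1 - mixCoef n q NE.card) / 2 ^ n * eta (norm1 v) ≤
      pObs q NE x * eta (v ⬝ᵥ zvec i x) := fun x =>
    mul_le_mul (hp x)
      (eta_le_eta_of_abs_le ((abs_dotProduct_zvec_le_norm1 i v x).trans (le_abs_self _)))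
      (eta_pos _).le (hp₀.trans (hp x))
  calc (1 - mixCoef n q NE.card) * eta (norm1 v) * ∑ j, y j ^ 2
      = ∑ x : Fin n → Bool,
          (1 - mixCoef n q NE.card) / 2 ^ n * eta (norm1 v) * (y ⬝ᵥ zvec i x) ^ 2 := by
        rw [← Finset.mul_sum, sum_dotProduct_zvec_sq]
        field_simp
    _ ≤ ∑ x : Fin n → Bool, pObs q NE x * eta (v ⬝ᵥ zvec i x) * (y ⬝ᵥ zvec i x) ^ 2 :=
        Finset.sum_le_sum fun x _ => mul_le_mul_of_nonneg_right (hweight x) (sq_nonneg _)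
    _ = quadForm (popHess q NE i v) y := (quadForm_sum_smul_vecMulVec _ _ y).symm

theorem population_hessian_min_eig_positive_general
    (n : ℕ) (W : Matrix (Fin n) (Fin n) ℝ) (b : Fin n → ℝ)
    (q : ℝ)
    (hq1 : ((NEset W b).card : ℝ) / (2 : ℝ) ^ n < q) (hq2 : q < 1)
    (i : Fin n) :
    minEigSubGE (popHess q (NEset W b) i (vvec W b i)) (supp (vvec W b i))
        ((1 - mixCoef n q (NEset W b).card) * eta (norm1 (vvec W b i))) ∧
      0 < (1 - mixCoef n q (NEset W b).card) * eta (norm1 (vvec W b i)) := by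
  have hc : ((NEset W b).card : ℝ) < 2 ^ n := (div_lt_one (by positivity)).mp (hq1.trans hq2)
  exact ⟨fun y _ => quadForm_popHess_ge q _ hc hq1.le hq2.le i _ y,
    mul_pos (sub_pos.mpr (mixCoef_lt_one hc hq2)) (eta_pos _)⟩

/-- under the mixture observation model,
`λ_min(H*_SS) ≥ (1-ν)·η(‖v*‖₁) > 0`; in particular `q ∈ (|NE*|/2^n, 1)`
(equivalently `ν < 1`) by itself makes `λ_min(H*_SS)` strictly positive. -/
theorem population_hessian_min_eig_positive
    (n : ℕ) (W : Matrix (Fin n) (Fin n) ℝ) (b : Fin n → ℝ)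
    (hdiag : ∀ i, W i i = 0) (q : ℝ)
    (hNE1 : 1 ≤ (NEset W b).card) (hNE2 : (NEset W b).card < 2 ^ n)
    (hq1 : ((NEset W b).card : ℝ) / (2 : ℝ) ^ n < q) (hq2 : q < 1)
    (i : Fin n) :
    minEigSubGE (popHess q (NEset W b) i (vvec W b i)) (supp (vvec W b i))
        ((1 - mixCoef n q (NEset W b).card) * eta (norm1 (vvec W b i))) ∧
      0 < (1 - mixCoef n q (NEset W b).card) * eta (norm1 (vvec W b i)) :=
  population_hessian_min_eig_positive_general n W b q hq1 hq2 i
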